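/- The generalized bounding number 𝔟_κ equals the minimum cardinality of a family 𝒜 of clubs in κ that is unbounded in (Cub_κ, ⊇*), i.e., such that no club is almost contained in every member of 𝒜. -/

import Mathlib

/-! For a club `C` let `nextIn C β` be the least element of `C` above `β`, and for `f : κ → κ` let
`closurePoints κ f` be the club of nonzero ordinals closed under `f`. The two maps reverse the
orders: `nextIn C ≤* g` forces `closurePoints κ g ⊆* C`, and `C ⊆* closurePoints κ f` forces
`f ≤* nextIn C`. So each map sends an unbounded family to an unbounded family of no larger size,
in either direction, and the two least sizes coincide. -/

open Cardinal Set

namespace PaperFormal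

/-- `A` is unbounded in `κ` (as a set of ordinals below `κ`). -/
def UnboundedIn (κ : Ordinal.{0}) (A : Set Ordinal) : Prop :=
  ∀ α < κ, ∃ β ∈ A, α ≤ β

/-- `A ⊆* B`: almost inclusion (mod bounded) below `κ`. -/
def AlmostSub (κ : Ordinal.{0}) (A B : Set Ordinal) : Prop :=
  ∃ α < κ, ∀ β ∈ A, α ≤ β → β ∈ B

/-- `C` is closed in `κ`. -/
def ClosedIn (κ : Ordinal.{0}) (C : Set Ordinal) : Prop :=
  ∀ α, α < κ → α ≠ 0 → (∀ β < α, (C ∩ Set.Ioo β α).Nonempty) → α ∈ C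

/-- `C` is a club (closed unbounded set) in `κ`. -/
def IsClub (κ : Ordinal.{0}) (C : Set Ordinal) : Prop :=
  C ⊆ Set.Iio κ ∧ UnboundedIn κ C ∧ ClosedIn κ C

/-- `f` maps `κ` into `κ`. -/
def FunOn (κ : Ordinal.{0}) (f : Ordinal → Ordinal) : Prop :=
  ∀ β < κ, f β < κ

/-- almost everywhere domination `f ≤* g` on `κ`. -/
def LeStar (κ : Ordinal.{0}) (f g : Ordinal → Ordinal) : Prop :=
  ∃ α < κ, ∀ β, α ≤ β → β < κ → f β ≤ g β

def UnboundedFunFam (κ : Ordinal.{0}) (𝒜 : Set (Ordinal → Ordinal)) : Prop :=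
  (∀ f ∈ 𝒜, FunOn κ f) ∧ ∀ g, FunOn κ g → ∃ f ∈ 𝒜, ¬ LeStar κ f g

def DominatingFunFam (κ : Ordinal.{0}) (𝒜 : Set (Ordinal → Ordinal)) : Prop :=
  (∀ f ∈ 𝒜, FunOn κ f) ∧ ∀ g, FunOn κ g → ∃ f ∈ 𝒜, LeStar κ g f

/-- the generalized bounding number `𝔟_κ`. -/
noncomputable def bNum (κ : Ordinal.{0}) : Cardinal :=
  sInf { μ : Cardinal.{0} | ∃ 𝒜, UnboundedFunFam κ 𝒜 ∧ #𝒜 = Cardinal.lift.{1} μ }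

/-- the generalized dominating number `𝔡_κ`. -/
noncomputable def dNum (κ : Ordinal.{0}) : Cardinal :=
  sInf { μ : Cardinal.{0} | ∃ 𝒜, DominatingFunFam κ 𝒜 ∧ #𝒜 = Cardinal.lift.{1} μ }

/-- a (proper) filter on `κ`. -/
structure IsKFilter (κ : Ordinal.{0}) (F : Set (Set Ordinal)) : Prop where
  subset : ∀ A ∈ F, A ⊆ Set.Iio κ
  univ_mem : Set.Iio κ ∈ F
  upward : ∀ A ∈ F, ∀ B, B ⊆ Set.Iio κ → A ⊆ B → B ∈ F
  inter : ∀ A ∈ F, ∀ B ∈ F, A ∩ B ∈ F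
  proper : ∅ ∉ F

/-- an ultrafilter on `κ`. -/
structure IsKUltrafilter (κ : Ordinal.{0}) (U : Set (Set Ordinal)) extends IsKFilter κ U : Prop where
  decide : ∀ A, A ⊆ Set.Iio κ → A ∈ U ∨ (Set.Iio κ \ A) ∈ U

/-- uniformity: every member is unbounded (equivalently, for regular `κ`, of size `κ`). -/
def Uniform (κ : Ordinal.{0}) (F : Set (Set Ordinal)) : Prop :=
  ∀ A ∈ F, UnboundedIn κ A

/-- `κ`-completeness. -/
def KComplete (κ : Ordinal.{0}) (F : Set (Set Ordinal)) : Prop :=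
  ∀ s : Set (Set Ordinal), s ⊆ F → s.Nonempty → #s < Cardinal.lift.{1} κ.card → ⋂₀ s ∈ F

/-- closure under diagonal intersections. -/
def DiagClosed (κ : Ordinal.{0}) (F : Set (Set Ordinal)) : Prop :=
  ∀ A : Ordinal → Set Ordinal, (∀ i < κ, A i ∈ F) →
    {β | β < κ ∧ ∀ i < β, β ∈ A i} ∈ F

/-- a normal ultrafilter on `κ`: `κ`-complete, contains all clubs, closed under
diagonal intersections. -/
def NormalUF (κ : Ordinal.{0}) (U : Set (Set Ordinal)) : Prop :=
  IsKUltrafilter κ U ∧ Uniform κ U ∧ KComplete κ U ∧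
    (∀ C, IsClub κ C → C ∈ U) ∧ DiagClosed κ U

/-- `ℬ` is a `⊆*`-base for `F`. -/
def IsBase (κ : Ordinal.{0}) (F ℬ : Set (Set Ordinal)) : Prop :=
  ℬ ⊆ F ∧ ∀ A ∈ F, ∃ B ∈ ℬ, AlmostSub κ B A

/-- the character of a filter. -/
noncomputable def chNum (κ : Ordinal.{0}) (F : Set (Set Ordinal)) : Cardinal :=
  sInf { μ : Cardinal.{0} | ∃ ℬ, IsBase κ F ℬ ∧ #ℬ = Cardinal.lift.{1} μ }

/-- there is a `⊆*`-decreasing `λ`-sequence in `F` with no `⊆*`-lower bound in `F`. -/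
def HasTower (κ : Ordinal.{0}) (F : Set (Set Ordinal)) (lam : Cardinal) : Prop :=
  ∃ S : Ordinal → Set Ordinal, (∀ i < lam.ord, S i ∈ F) ∧
    (∀ i j, i < j → j < lam.ord → AlmostSub κ (S j) (S i)) ∧
    ¬ ∃ Y ∈ F, ∀ i < lam.ord, AlmostSub κ Y (S i)

/-- the depth `𝔱(F)` of a filter. -/
noncomputable def tNum (κ : Ordinal.{0}) (F : Set (Set Ordinal)) : Cardinal :=
  sInf { μ : Cardinal.{0} | μ.IsRegular ∧ HasTower κ F μ }

/-- the ultrafilter number `𝔲_κ`. -/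
noncomputable def uNum (κ : Ordinal.{0}) : Cardinal :=
  sInf { μ : Cardinal.{0} | ∃ U, IsKUltrafilter κ U ∧ Uniform κ U ∧ chNum κ U = μ }

/-- the complete ultrafilter number `𝔲^com_κ`. -/
noncomputable def uComNum (κ : Ordinal.{0}) : Cardinal :=
  sInf { μ : Cardinal.{0} | ∃ U, IsKUltrafilter κ U ∧ Uniform κ U ∧ KComplete κ U ∧ chNum κ U = μ }

/-- `U` is a simple `P_λ`-point: a uniform ultrafilter with a `⊆*`-decreasing
generating sequence of length `λ`. -/
def SimplePPoint (κ : Ordinal.{0}) (lam : Cardinal) (U : Set (Set Ordinal)) : Prop :=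
  IsKUltrafilter κ U ∧ Uniform κ U ∧
    ∃ S : Ordinal → Set Ordinal, (∀ i < lam.ord, S i ∈ U) ∧
      (∀ i j, i < j → j < lam.ord → AlmostSub κ (S j) (S i)) ∧
      ∀ A ∈ U, ∃ i < lam.ord, AlmostSub κ (S i) A

/-- a `⊆*`-decreasing generating sequence of length `λ` for a filter `F`. -/
def SimplePFilter (κ : Ordinal.{0}) (lam : Cardinal) (F : Set (Set Ordinal)) : Prop :=
  ∃ S : Ordinal → Set Ordinal, (∀ i < lam.ord, S i ∈ F) ∧
    (∀ i j, i < j → j < lam.ord → AlmostSub κ (S j) (S i)) ∧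
    ∀ A ∈ F, ∃ i < lam.ord, AlmostSub κ (S i) A

/-- `ℬ` is a `π`-base for `U`: unbounded sets, almost contained in members of `U`. -/
def IsPiBase (κ : Ordinal.{0}) (U ℬ : Set (Set Ordinal)) : Prop :=
  (∀ B ∈ ℬ, B ⊆ Set.Iio κ ∧ UnboundedIn κ B) ∧ ∀ A ∈ U, ∃ B ∈ ℬ, AlmostSub κ B A

/-- the `π`-character `πch(U)`. -/
noncomputable def piChNum (κ : Ordinal.{0}) (U : Set (Set Ordinal)) : Cardinal :=
  sInf { μ : Cardinal.{0} | ∃ ℬ, IsPiBase κ U ℬ ∧ #ℬ = Cardinal.lift.{1} μ }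

/-- `Y` is a pseudo-intersection of the family `𝒜`. -/
def IsPseudoInter (κ : Ordinal.{0}) (𝒜 : Set (Set Ordinal)) (Y : Set Ordinal) : Prop :=
  Y ⊆ Set.Iio κ ∧ UnboundedIn κ Y ∧ ∀ A ∈ 𝒜, AlmostSub κ Y A

/-- `π𝔭(U)`: the least size of a subfamily of `U` with no pseudo-intersection. -/
noncomputable def piPNum (κ : Ordinal.{0}) (U : Set (Set Ordinal)) : Cardinal :=
  sInf { μ : Cardinal.{0} | ∃ 𝒜, 𝒜 ⊆ U ∧ #𝒜 = Cardinal.lift.{1} μ ∧ ¬ ∃ Y, IsPseudoInter κ 𝒜 Y }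

/-- a `⊆*`-decreasing `λ`-sequence in `U` unbounded in `([κ]^κ, ⊇*)`. -/
def HasPiTower (κ : Ordinal.{0}) (U : Set (Set Ordinal)) (lam : Cardinal) : Prop :=
  ∃ S : Ordinal → Set Ordinal, (∀ i < lam.ord, S i ∈ U) ∧
    (∀ i j, i < j → j < lam.ord → AlmostSub κ (S j) (S i)) ∧
    ¬ ∃ Y, Y ⊆ Set.Iio κ ∧ UnboundedIn κ Y ∧ ∀ i < lam.ord, AlmostSub κ Y (S i)

/-- `π𝔱(U)`. -/
noncomputable def piTNum (κ : Ordinal.{0}) (U : Set (Set Ordinal)) : Cardinal :=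
  sInf { μ : Cardinal.{0} | μ.IsRegular ∧ HasPiTower κ U μ }

/-- `A` splits `B`. -/
def Splits (κ : Ordinal.{0}) (A B : Set Ordinal) : Prop :=
  UnboundedIn κ (B ∩ A) ∧ UnboundedIn κ (B \ A)

/-- the splitting number `𝔰_κ`. -/
noncomputable def sNum (κ : Ordinal.{0}) : Cardinal :=
  sInf { μ : Cardinal.{0} | ∃ 𝒜 : Set (Set Ordinal), (∀ A ∈ 𝒜, A ⊆ Set.Iio κ) ∧
    (∀ X, X ⊆ Set.Iio κ → UnboundedIn κ X → ∃ A ∈ 𝒜, Splits κ A X) ∧ #𝒜 = Cardinal.lift.{1} μ }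

/-- the reaping number `𝔯_κ`. -/
noncomputable def rNum (κ : Ordinal.{0}) : Cardinal :=
  sInf { μ : Cardinal.{0} | ∃ 𝒜 : Set (Set Ordinal), (∀ A ∈ 𝒜, A ⊆ Set.Iio κ ∧ UnboundedIn κ A) ∧
    (¬ ∃ X, X ⊆ Set.Iio κ ∧ ∀ A ∈ 𝒜, Splits κ X A) ∧ #𝒜 = Cardinal.lift.{1} μ }

/-- `f` is almost one-to-one modulo `U`: bounded-to-one on a set in `U`. -/
def AlmostInjMod (κ : Ordinal.{0}) (U : Set (Set Ordinal)) (f : Ordinal → Ordinal) : Prop :=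
  ∃ X ∈ U, ∀ γ < κ, ∃ α < κ, ∀ β ∈ X, f β = γ → β < α

/-- the pushforward `f_*(U)`. -/
def PushFwd (κ : Ordinal.{0}) (f : Ordinal → Ordinal) (U : Set (Set Ordinal)) :
    Set (Set Ordinal) :=
  { A | A ⊆ Set.Iio κ ∧ (Set.Iio κ ∩ f ⁻¹' A) ∈ U }

/-- countable completeness. -/
def CountablyComplete (U : Set (Set Ordinal)) : Prop :=
  ∀ s : Set (Set Ordinal), s ⊆ U → s.Countable → s.Nonempty → ⋂₀ s ∈ U

universe u

theorem csInf_card_eq_of_forall_exists_card_le {α β : Type (u + 1)}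
    {P : Set α → Prop} {Q : Set β → Prop}
    (hPQ : ∀ A, P A → ∃ B, Q B ∧ #B ≤ #A) (hQP : ∀ B, Q B → ∃ A, P A ∧ #A ≤ #B) :
    sInf { μ : Cardinal.{u} | ∃ A, P A ∧ #A = Cardinal.lift.{u + 1} μ } =
      sInf { μ : Cardinal.{u} | ∃ B, Q B ∧ #B = Cardinal.lift.{u + 1} μ } := by
  have reduce : ∀ {γ δ : Type (u + 1)} {R : Set γ → Prop} {S : Set δ → Prop},
      (∀ A, R A → ∃ B, S B ∧ #B ≤ #A) →
        ∀ μ ∈ { μ : Cardinal.{u} | ∃ A, R A ∧ #A = lift.{u + 1} μ },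
          ∃ ν ∈ { ν : Cardinal.{u} | ∃ B, S B ∧ #B = lift.{u + 1} ν }, ν ≤ μ := by
    rintro γ δ R S hRS μ ⟨A, hA, hAμ⟩
    obtain ⟨B, hB, hBA⟩ := hRS A hA
    obtain ⟨ν, hνB⟩ := mem_range_lift_of_le (hBA.trans_eq hAμ)
    exact ⟨ν, ⟨B, hB, hνB.symm⟩, lift_le.mp (hνB ▸ hBA.trans_eq hAμ)⟩
  exact csInf_eq_csInf_of_forall_exists_le (reduce hPQ) (reduce hQP)

section NextIn

variable {o : Ordinal.{0}} {C : Set Ordinal}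

noncomputable def nextIn (C : Set Ordinal) (β : Ordinal) : Ordinal :=
  sInf (C ∩ Ioi β)

theorem IsClub.nextIn_mem (ho : Order.IsSuccLimit o) (hC : IsClub o C) {β : Ordinal}
    (hβ : β < o) : nextIn C β ∈ C ∩ Ioi β := by
  obtain ⟨δ, hδC, hδ⟩ := hC.2.1 (β + 1) (ho.add_one_lt hβ)
  exact csInf_mem ⟨δ, hδC, (Order.lt_add_one_iff.mpr le_rfl).trans_le hδ⟩

theorem IsClub.funOn_nextIn (ho : Order.IsSuccLimit o) (hC : IsClub o C) :
    FunOn o (nextIn C) :=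
  fun _ hβ => hC.1 (hC.nextIn_mem ho hβ).1

end NextIn

def closurePoints (o : Ordinal.{0}) (f : Ordinal → Ordinal) : Set Ordinal :=
  {β | β < o ∧ β ≠ 0 ∧ ∀ γ < β, f γ < β}

theorem closedIn_closurePoints (o : Ordinal.{0}) (f : Ordinal → Ordinal) :
    ClosedIn o (closurePoints o f) := by
  intro α hαo hα0 hcl
  refine ⟨hαo, hα0, fun γ hγα => ?_⟩
  obtain ⟨δ, hδ, hγδ, hδα⟩ := hcl γ hγα
  exact (hδ.2.2 γ hγδ).trans hδα

theorem unboundedIn_closurePoints {κ : Cardinal.{0}} (hκ : κ.IsRegular) (hunc : ℵ₀ < κ)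
    {f : Ordinal → Ordinal} (hf : FunOn κ.ord f) : UnboundedIn κ.ord (closurePoints κ.ord f) := by
  intro α hα
  -- `F x` strictly bounds `f` on `x`, so the supremum of the iterates of `F` from `α + 1` is a
  -- closure point of `f`; regularity keeps every step below `κ`.
  let F : Ordinal → Ordinal := fun x => ⨆ γ : Iio x, f γ + 1
  have hF : ∀ x < κ.ord, F x < κ.ord := fun x hx =>
    Ordinal.lift_iSup_add_one_lt_of_lt_cof
      (by rw [lift_uzero, mk_Iio_ordinal, ← Ordinal.lift_cof, hκ.cof_ord, lift_lt]
          exact lt_ord.mp hx)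
      fun γ => hf γ (γ.2.trans hx)
  have hαβ : α < Ordinal.nfp F (α + 1) :=
    (Order.lt_add_one_iff.mpr le_rfl).trans_le (Ordinal.le_nfp F _)
  refine ⟨Ordinal.nfp F (α + 1), ⟨?_, hαβ.ne_bot, fun γ hγ => ?_⟩, hαβ.le⟩
  · exact nfp_lt_ord_of_isRegular hκ hunc.ne' hF ((isSuccLimit_ord hunc.le).add_one_lt hα)
  · obtain ⟨n, hn⟩ := Ordinal.lt_nfp_iff.mp hγ
    calc f γ < f γ + 1 := Order.lt_add_one_iff.mpr le_rfl
      _ ≤ F (F^[n] (α + 1)) := Ordinal.le_iSup (fun δ : Iio _ => f δ + 1) ⟨γ, hn⟩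
      _ = F^[n + 1] (α + 1) := (Function.iterate_succ_apply' F n _).symm
      _ ≤ Ordinal.nfp F (α + 1) := Ordinal.iterate_le_nfp F _ _

theorem isClub_closurePoints {κ : Cardinal.{0}} (hκ : κ.IsRegular) (hunc : ℵ₀ < κ)
    {f : Ordinal → Ordinal} (hf : FunOn κ.ord f) : IsClub κ.ord (closurePoints κ.ord f) :=
  ⟨fun _ hβ => hβ.1, unboundedIn_closurePoints hκ hunc hf, closedIn_closurePoints _ f⟩

section Translation

variable {o : Ordinal.{0}} {C : Set Ordinal}

theorem almostSub_closurePoints_of_leStar (ho : Order.IsSuccLimit o) (hC : IsClub o C)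
    {g : Ordinal → Ordinal} (h : LeStar o (nextIn C) g) :
    AlmostSub o (closurePoints o g) C := by
  obtain ⟨α, hαo, hdom⟩ := h
  refine ⟨α + 1, ho.add_one_lt hαo, fun β ⟨hβo, hβ0, hβg⟩ hαβ => ?_⟩
  replace hαβ : α < β := Order.add_one_le_iff.mp hαβ
  refine hC.2.2 β hβo hβ0 fun γ hγ => ?_
  -- `nextIn C δ` lies in `(γ, g δ]` for `δ := max γ α`, and `g δ < β` since `β` closes `g`.
  have hδβ : max γ α < β := max_lt hγ hαβ
  obtain ⟨hδC, hδlt⟩ := hC.nextIn_mem ho (hδβ.trans hβo)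
  exact ⟨_, hδC, (le_max_left γ α).trans_lt hδlt,
    (hdom _ (le_max_right γ α) (hδβ.trans hβo)).trans_lt (hβg _ hδβ)⟩

theorem leStar_nextIn_of_almostSub (ho : Order.IsSuccLimit o) (hC : IsClub o C)
    {f : Ordinal → Ordinal} (h : AlmostSub o C (closurePoints o f)) :
    LeStar o f (nextIn C) := by
  obtain ⟨α, hαo, hsub⟩ := h
  refine ⟨α, hαo, fun β hαβ hβo => ?_⟩
  obtain ⟨hC, hβ⟩ := hC.nextIn_mem ho hβo
  exact ((hsub _ hC (hαβ.trans hβ.le)).2.2 β hβ).le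

end Translation

def IsUnboundedClubFam (o : Ordinal.{0}) (𝒜 : Set (Set Ordinal)) : Prop :=
  (∀ A ∈ 𝒜, IsClub o A) ∧ ¬ ∃ C, IsClub o C ∧ ∀ A ∈ 𝒜, AlmostSub o C A

theorem unboundedFunFam_image_nextIn {κ : Cardinal.{0}} (hκ : κ.IsRegular) (hunc : ℵ₀ < κ)
    {𝒜 : Set (Set Ordinal)} (h𝒜 : IsUnboundedClubFam κ.ord 𝒜) :
    UnboundedFunFam κ.ord (nextIn '' 𝒜) := by
  have ho := isSuccLimit_ord hunc.le
  refine ⟨fun _ ⟨A, hA, hf⟩ => hf ▸ (h𝒜.1 A hA).funOn_nextIn ho, fun g hg => ?_⟩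
  by_contra! hbdd
  exact h𝒜.2 ⟨closurePoints κ.ord g, isClub_closurePoints hκ hunc hg, fun A hA =>
    almostSub_closurePoints_of_leStar ho (h𝒜.1 A hA) (hbdd _ ⟨A, hA, rfl⟩)⟩

theorem isUnboundedClubFam_image_closurePoints {κ : Cardinal.{0}} (hκ : κ.IsRegular)
    (hunc : ℵ₀ < κ) {𝒜 : Set (Ordinal → Ordinal)} (h𝒜 : UnboundedFunFam κ.ord 𝒜) :
    IsUnboundedClubFam κ.ord (closurePoints κ.ord '' 𝒜) := by
  have ho := isSuccLimit_ord hunc.le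
  refine ⟨fun _ ⟨f, hf, hA⟩ => hA ▸ isClub_closurePoints hκ hunc (h𝒜.1 f hf), ?_⟩
  rintro ⟨C, hC, hsub⟩
  obtain ⟨f, hf, hnle⟩ := h𝒜.2 (nextIn C) (hC.funOn_nextIn ho)
  exact hnle (leStar_nextIn_of_almostSub ho hC (hsub _ ⟨f, hf, rfl⟩))

/-- `𝔟_κ` is the least size of a family of clubs in `κ` that is unbounded
in `(Cub_κ, ⊇*)`. -/
theorem stmt2 (κ : Cardinal.{0}) (hreg : κ.IsRegular) (hunc : Cardinal.aleph0 < κ) :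
    bNum κ.ord = sInf { μ : Cardinal.{0} | ∃ 𝒜 : Set (Set Ordinal),
      (∀ A ∈ 𝒜, IsClub κ.ord A) ∧
      (¬ ∃ C, IsClub κ.ord C ∧ ∀ A ∈ 𝒜, AlmostSub κ.ord C A) ∧
      #𝒜 = Cardinal.lift.{1} μ } := by
  simp only [← and_assoc]
  exact csInf_card_eq_of_forall_exists_card_le (Q := IsUnboundedClubFam κ.ord)
    (fun 𝒜 h𝒜 => ⟨_, isUnboundedClubFam_image_closurePoints hreg hunc h𝒜, mk_image_le⟩)
    (fun 𝒜 h𝒜 => ⟨_, unboundedFunFam_image_nextIn hreg hunc h𝒜, mk_image_le⟩)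

end PaperFormal
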